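/- arXiv:2404.05835 — 2 statements merged into one kernel-verified Lean document; each statement's English description precedes it below -/
import Mathlib

section
/- Suppose there is a constant L ≥ 0 such that the linear-predictor error bound ‖π_MPC(x, θ_nom) + G(x)(θ − θ_nom) − π_MPC(x, θ)‖ ≤ L‖θ − θ_nom‖ holds for all x ∈ ℝ^n and all θ ∈ Θ. Then for every state x ∈ ℝ^n and every θ ∈ Θ, ‖π_AMPC(x, θ) − π_MPC(x, θ)‖ ≤ ‖e_π(x)‖ + (‖e_∇(x)‖ + L)‖θ − θ_nom‖, where ‖e_∇(x)‖ denotes the operator norm. -/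
/-- under the linear-predictor error bound with constant `L`,
the parameter-adaptive AMPC deviates from the exact MPC by at most
`‖e_π(x)‖ + (‖e_∇(x)‖ + L)·‖θ − θ_nom‖`. -/
theorem ampc_error_bound
    (n m q : ℕ)
    (Θ : Set (EuclideanSpace ℝ (Fin q)))
    (θnom : EuclideanSpace ℝ (Fin q)) (hθnom : θnom ∈ Θ)
    (πMPC : EuclideanSpace ℝ (Fin n) → EuclideanSpace ℝ (Fin q) → EuclideanSpace ℝ (Fin m))
    (πNN : EuclideanSpace ℝ (Fin n) → EuclideanSpace ℝ (Fin m))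
    (G πGrad : EuclideanSpace ℝ (Fin n) →
      (EuclideanSpace ℝ (Fin q) →L[ℝ] EuclideanSpace ℝ (Fin m)))
    (eπ : EuclideanSpace ℝ (Fin n) → EuclideanSpace ℝ (Fin m))
    (heπ : ∀ x, eπ x = πNN x - πMPC x θnom)
    (eGrad : EuclideanSpace ℝ (Fin n) →
      (EuclideanSpace ℝ (Fin q) →L[ℝ] EuclideanSpace ℝ (Fin m)))
    (heGrad : ∀ x, eGrad x = πGrad x - G x)
    (πAMPC : EuclideanSpace ℝ (Fin n) → EuclideanSpace ℝ (Fin q) → EuclideanSpace ℝ (Fin m))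
    (hAMPC : ∀ x θ, πAMPC x θ = πNN x + πGrad x (θ - θnom))
    (L : ℝ) (hL : 0 ≤ L)
    (hpred : ∀ x : EuclideanSpace ℝ (Fin n), ∀ θ ∈ Θ,
      ‖πMPC x θnom + G x (θ - θnom) - πMPC x θ‖ ≤ L * ‖θ - θnom‖) :
    ∀ x : EuclideanSpace ℝ (Fin n), ∀ θ ∈ Θ,
      ‖πAMPC x θ - πMPC x θ‖ ≤ ‖eπ x‖ + (‖eGrad x‖ + L) * ‖θ - θnom‖ := by
  intro x θ hθ
  have hdecomp : πAMPC x θ - πMPC x θ =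
      eπ x + (eGrad x) (θ - θnom) + (πMPC x θnom + G x (θ - θnom) - πMPC x θ) := by
    rw [hAMPC, heπ, heGrad]
    simp only [ContinuousLinearMap.sub_apply]
    abel
  rw [hdecomp]
  calc ‖eπ x + (eGrad x) (θ - θnom) + (πMPC x θnom + G x (θ - θnom) - πMPC x θ)‖
      ≤ ‖eπ x‖ + ‖(eGrad x) (θ - θnom)‖ + ‖πMPC x θnom + G x (θ - θnom) - πMPC x θ‖ :=
        norm_add₃_le
    _ ≤ ‖eπ x‖ + ‖eGrad x‖ * ‖θ - θnom‖ + L * ‖θ - θnom‖ := by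
        gcongr
        · exact (eGrad x).le_opNorm _
        · exact hpred x θ hθ
    _ = ‖eπ x‖ + (‖eGrad x‖ + L) * ‖θ - θnom‖ := by ring
end

section
/- (Quantitative content of Theorem 1.) Suppose there is a constant L ≥ 0 such that ‖π_MPC(x, θ_nom) + G(x)(θ − θ_nom) − π_MPC(x, θ)‖ ≤ L‖θ − θ_nom‖ for all x ∈ ℝ^n and all θ ∈ Θ. Let η > 0 and suppose there exists ε > 0 with ‖e_π(x)‖ + ε < η for all x ∈ ℝ^n. Then for every parameter θ in the set Θ̃ := { θ ∈ Θ : (sup_{x ∈ ℝ^n} ‖e_∇(x)‖ + L)·‖θ − θ_nom‖ < ε } and every state x ∈ ℝ^n, the input disturbance incurred by replacing the exact MPC with the parameter-adaptive AMPC satisfies ‖π_AMPC(x, θ) − π_MPC(x, θ)‖ < η; in particular it is at most η, the maximum allowable input disturbance of the robust MPC. -/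
open scoped ENNReal

/-! The AMPC error at `(x, θ)` splits as `e_π(x) + e_∇(x)(θ - θ_nom)` plus the error of the exact
first-order predictor `π_MPC(x, θ_nom) + G(x)(θ - θ_nom) - π_MPC(x, θ)`. The last two terms are
bounded by `(sup ‖e_∇‖ + L)‖θ - θ_nom‖ < ε`, so the total stays below `‖e_π(x)‖ + ε < η`. -/

theorem norm_add_apply_sub_le {𝕜 E F : Type*} [NontriviallyNormedField 𝕜]
    [SeminormedAddCommGroup E] [SeminormedAddCommGroup F] [NormedSpace 𝕜 E] [NormedSpace 𝕜 F]
    (a b c : F) (A G : E →L[𝕜] F) (v : E) :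
    ‖a + A v - c‖ ≤ ‖a - b‖ + ‖A - G‖ * ‖v‖ + ‖b + G v - c‖ := by
  have hsplit : a + A v - c = (a - b) + (A - G) v + (b + G v - c) := by
    rw [sub_apply]
    abel
  calc ‖a + A v - c‖ ≤ ‖a - b‖ + ‖(A - G) v‖ + ‖b + G v - c‖ := hsplit ▸ norm_add₃_le
    _ ≤ ‖a - b‖ + ‖A - G‖ * ‖v‖ + ‖b + G v - c‖ := by gcongr; exact (A - G).le_opNorm v

theorem add_mul_lt_of_iSup_nnnorm_add_mul_lt {ι E : Type*} [SeminormedAddCommGroup E]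
    (g : ι → E) {L d ε : ℝ} (hd : 0 ≤ d)
    (h : ((⨆ i, (‖g i‖₊ : ℝ≥0∞)) + ENNReal.ofReal L) * ENNReal.ofReal d < ENNReal.ofReal ε)
    (i : ι) : (‖g i‖ + L) * d < ε := by
  have hlt : ENNReal.ofReal ((‖g i‖ + L) * d) < ENNReal.ofReal ε :=
    calc ENNReal.ofReal ((‖g i‖ + L) * d)
        = ENNReal.ofReal (‖g i‖ + L) * ENNReal.ofReal d := ENNReal.ofReal_mul' hd
      _ ≤ (ENNReal.ofReal ‖g i‖ + ENNReal.ofReal L) * ENNReal.ofReal d := by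
        gcongr; exact ENNReal.ofReal_add_le
      _ ≤ ((⨆ i, (‖g i‖₊ : ℝ≥0∞)) + ENNReal.ofReal L) * ENNReal.ofReal d := by
        gcongr
        rw [ofReal_norm]
        exact le_iSup (fun i => (‖g i‖₊ : ℝ≥0∞)) i
      _ < ENNReal.ofReal ε := h
  exact (ENNReal.ofReal_lt_ofReal_iff'.mp hlt).1

theorem ampc_stability_disturbance_bound_general
    (n m q : ℕ)
    (Θ : Set (EuclideanSpace ℝ (Fin q)))
    (θnom : EuclideanSpace ℝ (Fin q))
    (πMPC : EuclideanSpace ℝ (Fin n) → EuclideanSpace ℝ (Fin q) → EuclideanSpace ℝ (Fin m))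
    (πNN : EuclideanSpace ℝ (Fin n) → EuclideanSpace ℝ (Fin m))
    (G πGrad : EuclideanSpace ℝ (Fin n) →
      (EuclideanSpace ℝ (Fin q) →L[ℝ] EuclideanSpace ℝ (Fin m)))
    (eπ : EuclideanSpace ℝ (Fin n) → EuclideanSpace ℝ (Fin m))
    (heπ : ∀ x, eπ x = πNN x - πMPC x θnom)
    (eGrad : EuclideanSpace ℝ (Fin n) →
      (EuclideanSpace ℝ (Fin q) →L[ℝ] EuclideanSpace ℝ (Fin m)))
    (heGrad : ∀ x, eGrad x = πGrad x - G x)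
    (πAMPC : EuclideanSpace ℝ (Fin n) → EuclideanSpace ℝ (Fin q) → EuclideanSpace ℝ (Fin m))
    (hAMPC : ∀ x θ, πAMPC x θ = πNN x + πGrad x (θ - θnom))
    (L : ℝ)
    (hpred : ∀ x : EuclideanSpace ℝ (Fin n), ∀ θ ∈ Θ,
      ‖πMPC x θnom + G x (θ - θnom) - πMPC x θ‖ ≤ L * ‖θ - θnom‖)
    (η : ℝ)
    (ε : ℝ)
    (herr : ∀ x : EuclideanSpace ℝ (Fin n), ‖eπ x‖ + ε < η) :
    ∀ θ ∈ {θ ∈ Θ |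
        ((⨆ x : EuclideanSpace ℝ (Fin n), (‖eGrad x‖₊ : ℝ≥0∞)) + ENNReal.ofReal L) *
          ENNReal.ofReal ‖θ - θnom‖ < ENNReal.ofReal ε},
      ∀ x : EuclideanSpace ℝ (Fin n),
        ‖πAMPC x θ - πMPC x θ‖ < η := by
  rintro θ ⟨hθΘ, hθsmall⟩ x
  have hsmall : (‖eGrad x‖ + L) * ‖θ - θnom‖ < ε :=
    add_mul_lt_of_iSup_nnnorm_add_mul_lt eGrad (norm_nonneg _) hθsmall x
  calc ‖πAMPC x θ - πMPC x θ‖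
      ≤ ‖eπ x‖ + ‖eGrad x‖ * ‖θ - θnom‖ + ‖πMPC x θnom + G x (θ - θnom) - πMPC x θ‖ := by
        rw [hAMPC, heπ, heGrad]
        exact norm_add_apply_sub_le _ _ _ _ _ _
    _ ≤ ‖eπ x‖ + (‖eGrad x‖ + L) * ‖θ - θnom‖ := by linarith [hpred x θ hθΘ]
    _ < ‖eπ x‖ + ε := by gcongr
    _ < η := herr x

/-- quantitative content of Theorem 1 of the paper.  If the
linear-predictor error bound holds with constant `L`, and
`‖e_π(x)‖ + ε < η` for all states `x`, then for every parameter `θ` in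
`Θ̃ := {θ ∈ Θ | (sup_x ‖e_∇(x)‖ + L)·‖θ − θ_nom‖ < ε}` (the supremum taken in
`[0, ∞]`) and every state `x`, the input disturbance incurred by replacing the
exact MPC with the parameter-adaptive AMPC is smaller than `η`. -/
theorem ampc_stability_disturbance_bound
    (n m q : ℕ)
    (Θ : Set (EuclideanSpace ℝ (Fin q)))
    (θnom : EuclideanSpace ℝ (Fin q)) (hθnom : θnom ∈ Θ)
    (πMPC : EuclideanSpace ℝ (Fin n) → EuclideanSpace ℝ (Fin q) → EuclideanSpace ℝ (Fin m))
    (πNN : EuclideanSpace ℝ (Fin n) → EuclideanSpace ℝ (Fin m))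
    (G πGrad : EuclideanSpace ℝ (Fin n) →
      (EuclideanSpace ℝ (Fin q) →L[ℝ] EuclideanSpace ℝ (Fin m)))
    (eπ : EuclideanSpace ℝ (Fin n) → EuclideanSpace ℝ (Fin m))
    (heπ : ∀ x, eπ x = πNN x - πMPC x θnom)
    (eGrad : EuclideanSpace ℝ (Fin n) →
      (EuclideanSpace ℝ (Fin q) →L[ℝ] EuclideanSpace ℝ (Fin m)))
    (heGrad : ∀ x, eGrad x = πGrad x - G x)
    (πAMPC : EuclideanSpace ℝ (Fin n) → EuclideanSpace ℝ (Fin q) → EuclideanSpace ℝ (Fin m))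
    (hAMPC : ∀ x θ, πAMPC x θ = πNN x + πGrad x (θ - θnom))
    (L : ℝ) (hL : 0 ≤ L)
    (hpred : ∀ x : EuclideanSpace ℝ (Fin n), ∀ θ ∈ Θ,
      ‖πMPC x θnom + G x (θ - θnom) - πMPC x θ‖ ≤ L * ‖θ - θnom‖)
    (η : ℝ) (hη : 0 < η)
    (ε : ℝ) (hε : 0 < ε)
    (herr : ∀ x : EuclideanSpace ℝ (Fin n), ‖eπ x‖ + ε < η) :
    ∀ θ ∈ {θ ∈ Θ |
        ((⨆ x : EuclideanSpace ℝ (Fin n), (‖eGrad x‖₊ : ℝ≥0∞)) + ENNReal.ofReal L) *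
          ENNReal.ofReal ‖θ - θnom‖ < ENNReal.ofReal ε},
      ∀ x : EuclideanSpace ℝ (Fin n),
        ‖πAMPC x θ - πMPC x θ‖ < η :=
  ampc_stability_disturbance_bound_general n m q Θ θnom πMPC πNN G πGrad eπ heπ eGrad heGrad πAMPC
    hAMPC L hpred η ε herr
end
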